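/- arXiv:2110.12573 — 5 statements merged into one kernel-verified Lean document; each statement's English description precedes it below -/
import Mathlib

section
/- With $Z = I\{X \geq \gamma \text{ or } X \leq -2\gamma\} e^{-\gamma X + \gamma^2/2}$ under $X \sim N(\gamma,1)$, and $p = \bar\Phi(\gamma) + \bar\Phi(2\gamma)$, the relative second moment satisfies $\tilde E(Z^2)/p^2 = \Theta(\gamma e^{3\gamma^2/2})$ as $\gamma \to \infty$; in particular, $\lim_{\gamma\to\infty} \frac{\log(\tilde E(Z^2)/p^2)}{-\log p} > 0$, so $Z$ is not asymptotically efficient. -/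
open MeasureTheory Real Set Filter

/-- Standard normal tail function. -/
noncomputable def PhiBar (x : ℝ) : ℝ :=
  ∫ t in Ici x, (Real.sqrt (2 * π))⁻¹ * Real.exp (-t ^ 2 / 2)

/-- Rare-event probability `p = P(X ≥ γ or X ≤ -2γ)` for `X ∼ N(0,1)`. -/
noncomputable def rareProb (γ : ℝ) : ℝ := PhiBar γ + PhiBar (2 * γ)

/-- Relative second moment `Ẽ(Z²)/p²` of the one-point IS estimator under `N(γ,1)`. -/
noncomputable def relSecondMoment (γ : ℝ) : ℝ :=
  (∫ x in {x : ℝ | γ ≤ x ∨ x ≤ -2 * γ},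
      (Real.exp (-γ * x + γ ^ 2 / 2)) ^ 2 *
        ((Real.sqrt (2 * π))⁻¹ * Real.exp (-(x - γ) ^ 2 / 2))) / (rareProb γ) ^ 2

/-! The squared likelihood ratio `e^{-2γx + γ²}` tilts the `N(γ,1)` density into `e^{γ²}` times
the `N(-γ,1)` density, and under `N(-γ,1)` the event `{x ≥ γ or x ≤ -2γ}` again has probability
`p`. Hence `Ẽ(Z²) = e^{γ²} p`, i.e. `Ẽ(Z²)/p² = e^{γ²}/p`. The Mills-ratio bounds
`e^{-3/2} φ(γ)/γ ≤ p ≤ 2 φ(γ)/γ` give the `Θ(γ e^{3γ²/2})` growth, and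
`log (e^{γ²}/p) / (-log p) = 1 + γ²/(-log p) > 1` since `p < 1`. -/

lemma integrable_exp_neg_sq_div_two : Integrable fun x : ℝ => exp (-x ^ 2 / 2) := by
  simpa [neg_div, div_eq_inv_mul] using integrable_exp_neg_mul_sq (b := 1 / 2) (by norm_num)

lemma integrable_mul_exp_neg_sq_div_two : Integrable fun x : ℝ => x * exp (-x ^ 2 / 2) := by
  simpa [neg_div, div_eq_inv_mul] using integrable_mul_exp_neg_mul_sq (b := 1 / 2) (by norm_num)

lemma integral_Ioi_mul_exp_neg_sq_div_two (x : ℝ) :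
    ∫ t in Ioi x, t * exp (-t ^ 2 / 2) = exp (-x ^ 2 / 2) := by
  have hderiv (t : ℝ) : HasDerivAt (fun t => -exp (-t ^ 2 / 2)) (t * exp (-t ^ 2 / 2)) t := by
    have h : HasDerivAt (fun t : ℝ => -t ^ 2 / 2) (-t) t :=
      ((hasDerivAt_pow 2 t).neg.div_const 2).congr_deriv (by simp; ring)
    exact h.exp.neg.congr_deriv (by ring)
  have hlim : Tendsto (fun t : ℝ => -exp (-t ^ 2 / 2)) atTop (nhds 0) := by
    have : Tendsto (fun t : ℝ => -t ^ 2 / 2) atTop atBot :=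
      (tendsto_neg_atTop_atBot.comp (tendsto_pow_atTop two_ne_zero)).atBot_div_const two_pos
    simpa using (tendsto_exp_atBot.comp this).neg
  rw [integral_Ioi_of_hasDerivAt_of_tendsto' (fun t _ => hderiv t)
    integrable_mul_exp_neg_sq_div_two.integrableOn hlim]
  simp

lemma setIntegral_Ici_exp_neg_sq_div_two_le {x : ℝ} (hx : 0 < x) :
    ∫ t in Ici x, exp (-t ^ 2 / 2) ≤ exp (-x ^ 2 / 2) / x :=
  calc ∫ t in Ici x, exp (-t ^ 2 / 2)
      ≤ ∫ t in Ici x, x⁻¹ * (t * exp (-t ^ 2 / 2)) := by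
        refine setIntegral_mono_on integrable_exp_neg_sq_div_two.integrableOn
          (integrable_mul_exp_neg_sq_div_two.integrableOn.const_mul _) measurableSet_Ici
          fun t (ht : x ≤ t) => ?_
        rw [← mul_assoc]
        exact le_mul_of_one_le_left (exp_pos _).le ((one_le_inv_mul₀ hx).2 ht)
    _ = exp (-x ^ 2 / 2) / x := by
        rw [integral_const_mul, integral_Ici_eq_integral_Ioi,
          integral_Ioi_mul_exp_neg_sq_div_two, inv_mul_eq_div]

/-- On `[x, x + 1/x]` the integrand is at least `e^{-3/2} e^{-x²/2}` when `x ≥ 1`. -/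
lemma exp_neg_three_halves_mul_le_setIntegral_Ici {x : ℝ} (hx : 1 ≤ x) :
    exp (-3 / 2) * (exp (-x ^ 2 / 2) / x) ≤ ∫ t in Ici x, exp (-t ^ 2 / 2) := by
  have hx₀ : 0 < x := one_pos.trans_le hx
  have hexp : exp (-3 / 2) * exp (-x ^ 2 / 2) ≤ exp (-(x + x⁻¹) ^ 2 / 2) := by
    rw [← exp_add, exp_le_exp, add_sq, mul_inv_cancel_right₀ hx₀.ne']
    nlinarith [inv_le_one_of_one_le₀ hx, inv_pos.2 hx₀]
  have hvol : volume.real (Icc x (x + x⁻¹)) = x⁻¹ := by simp [hx₀.le]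
  calc exp (-3 / 2) * (exp (-x ^ 2 / 2) / x)
      ≤ volume.real (Icc x (x + x⁻¹)) • exp (-(x + x⁻¹) ^ 2 / 2) := by
        rw [hvol, smul_eq_mul, mul_div_assoc', div_eq_inv_mul]
        exact mul_le_mul_of_nonneg_left hexp (inv_pos.2 hx₀).le
    _ ≤ ∫ t in Icc x (x + x⁻¹), exp (-t ^ 2 / 2) :=
        setIntegral_ge_of_const_le measurableSet_Icc measure_Icc_lt_top.ne
          (fun t ht => exp_le_exp.2 <| by nlinarith [ht.1, ht.2])
          integrable_exp_neg_sq_div_two.integrableOn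
    _ ≤ ∫ t in Ici x, exp (-t ^ 2 / 2) :=
        setIntegral_mono_set integrable_exp_neg_sq_div_two.integrableOn
          (.of_forall fun t => (exp_pos _).le) (Icc_subset_Ici_self.eventuallyLE)

lemma PhiBar_eq_mul_setIntegral (x : ℝ) :
    PhiBar x = (√(2 * π))⁻¹ * ∫ t in Ici x, exp (-t ^ 2 / 2) :=
  integral_const_mul _ _

lemma PhiBar_eq_setIntegral_Iic (x : ℝ) :
    PhiBar x = ∫ t in Iic (-x), (√(2 * π))⁻¹ * exp (-t ^ 2 / 2) := by
  rw [PhiBar, integral_Ici_eq_integral_Ioi, ← neg_neg x,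
    ← integral_comp_neg_Iic (-x) fun t => (√(2 * π))⁻¹ * exp (-t ^ 2 / 2)]
  simp

lemma PhiBar_nonneg (x : ℝ) : 0 ≤ PhiBar x :=
  setIntegral_nonneg measurableSet_Ici fun _ _ => by positivity

lemma PhiBar_antitone : Antitone PhiBar := fun x y hxy =>
  setIntegral_mono_set (integrable_exp_neg_sq_div_two.const_mul _).integrableOn
    (.of_forall fun _ => by positivity) (Ici_subset_Ici.2 hxy).eventuallyLE

lemma PhiBar_le {x : ℝ} (hx : 0 < x) : PhiBar x ≤ (√(2 * π))⁻¹ * (exp (-x ^ 2 / 2) / x) := by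
  rw [PhiBar_eq_mul_setIntegral]
  gcongr
  exact setIntegral_Ici_exp_neg_sq_div_two_le hx

lemma exp_neg_three_halves_mul_le_PhiBar {x : ℝ} (hx : 1 ≤ x) :
    exp (-3 / 2) * ((√(2 * π))⁻¹ * (exp (-x ^ 2 / 2) / x)) ≤ PhiBar x := by
  rw [PhiBar_eq_mul_setIntegral, mul_left_comm]
  gcongr
  exact exp_neg_three_halves_mul_le_setIntegral_Ici hx

lemma secondMoment_eq_exp_sq_mul_rareProb {γ : ℝ} (hγ : 0 < γ) :
    ∫ x in {x : ℝ | γ ≤ x ∨ x ≤ -2 * γ}, (exp (-γ * x + γ ^ 2 / 2)) ^ 2 *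
        ((√(2 * π))⁻¹ * exp (-(x - γ) ^ 2 / 2)) = exp (γ ^ 2) * rareProb γ := by
  set φ : ℝ → ℝ := fun t => (√(2 * π))⁻¹ * exp (-t ^ 2 / 2)
  have hφ : Integrable φ := integrable_exp_neg_sq_div_two.const_mul _
  have htilt (x : ℝ) : (exp (-γ * x + γ ^ 2 / 2)) ^ 2 * ((√(2 * π))⁻¹ * exp (-(x - γ) ^ 2 / 2))
      = exp (γ ^ 2) * φ (x + γ) := by
    simp only [φ, ← exp_nat_mul, mul_left_comm (exp _), ← exp_add]
    ring_nf
  have hset : {x : ℝ | γ ≤ x ∨ x ≤ -2 * γ} = (· + γ) ⁻¹' (Ici (2 * γ) ∪ Iic (-γ)) := by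
    ext x
    simp only [preimage_union, preimage_add_const_Ici, preimage_add_const_Iic]
    grind
  have hdisj : Disjoint (Ici (2 * γ)) (Iic (-γ)) :=
    Set.disjoint_left.2 fun x (h₁ : 2 * γ ≤ x) (h₂ : x ≤ -γ) => by linarith
  simp_rw [htilt, hset]
  rw [integral_const_mul, (measurePreserving_add_right volume γ).setIntegral_preimage_emb
      (measurableEmbedding_addRight γ) φ, setIntegral_union hdisj measurableSet_Iic hφ.integrableOn
      hφ.integrableOn, ← PhiBar_eq_setIntegral_Iic, rareProb, add_comm]
  rfl

lemma relSecondMoment_eq {γ : ℝ} (hγ : 0 < γ) : relSecondMoment γ = exp (γ ^ 2) / rareProb γ := by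
  rw [relSecondMoment, secondMoment_eq_exp_sq_mul_rareProb hγ]
  grind

lemma rareProb_le {γ : ℝ} (hγ : 0 < γ) :
    rareProb γ ≤ 2 * ((√(2 * π))⁻¹ * (exp (-γ ^ 2 / 2) / γ)) := by
  have := PhiBar_antitone (by linarith : γ ≤ 2 * γ)
  rw [rareProb]
  linarith [PhiBar_le hγ]

lemma exp_neg_three_halves_mul_le_rareProb {γ : ℝ} (hγ : 1 ≤ γ) :
    exp (-3 / 2) * ((√(2 * π))⁻¹ * (exp (-γ ^ 2 / 2) / γ)) ≤ rareProb γ := by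
  rw [rareProb]
  linarith [exp_neg_three_halves_mul_le_PhiBar hγ, PhiBar_nonneg (2 * γ)]

lemma rareProb_pos {γ : ℝ} (hγ : 1 ≤ γ) : 0 < rareProb γ := by
  have hγ₀ : 0 < γ := one_pos.trans_le hγ
  exact lt_of_lt_of_le (by positivity) (exp_neg_three_halves_mul_le_rareProb hγ)

lemma rareProb_lt_one {γ : ℝ} (hγ : 1 ≤ γ) : rareProb γ < 1 := by
  have hγ₀ : 0 < γ := one_pos.trans_le hγ
  have hsqrt : 2 < √(2 * π) := (lt_sqrt zero_le_two).2 (by nlinarith [pi_gt_three])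
  calc rareProb γ ≤ 2 * ((√(2 * π))⁻¹ * (exp (-γ ^ 2 / 2) / γ)) := rareProb_le hγ₀
    _ ≤ 2 * ((√(2 * π))⁻¹ * 1) := by
        gcongr
        exact div_le_one_of_le₀ ((exp_le_one_iff.2 (by nlinarith)).trans hγ) hγ₀.le
    _ < 1 := by
        rw [mul_one, ← div_eq_mul_inv, div_lt_one (by positivity)]
        exact hsqrt

lemma relSecondMoment_mem_Icc {γ : ℝ} (hγ : 1 ≤ γ) :
    relSecondMoment γ ∈ Icc (√(2 * π) / 2 * (γ * exp (3 * γ ^ 2 / 2)))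
      (exp (3 / 2) * √(2 * π) * (γ * exp (3 * γ ^ 2 / 2))) := by
  have hγ₀ : 0 < γ := one_pos.trans_le hγ
  have hp := rareProb_pos hγ
  set s := √(2 * π) * (γ * exp (3 * γ ^ 2 / 2)) with hs
  set m := (√(2 * π))⁻¹ * (exp (-γ ^ 2 / 2) / γ) with hm_def
  have hm : 0 < m := by positivity
  have hsm : relSecondMoment γ = s * m / rareProb γ := by
    have hexp : exp (γ ^ 2) = s * m := by
      have : exp (γ ^ 2) = exp (3 * γ ^ 2 / 2) * exp (-γ ^ 2 / 2) := by rw [← exp_add]; ring_nf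
      rw [this, hs, hm_def]
      field_simp
    rw [relSecondMoment_eq hγ₀, hexp]
  constructor
  · calc √(2 * π) / 2 * (γ * exp (3 * γ ^ 2 / 2)) = s * m / (2 * m) := by rw [hs]; field_simp
      _ ≤ s * m / rareProb γ := div_le_div_of_nonneg_left (by positivity) hp (rareProb_le hγ₀)
      _ = relSecondMoment γ := hsm.symm
  · calc relSecondMoment γ = s * m / rareProb γ := hsm
      _ ≤ s * m / (exp (-3 / 2) * m) :=
          div_le_div_of_nonneg_left (by positivity) (by positivity)
            (exp_neg_three_halves_mul_le_rareProb hγ)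
      _ = exp (3 / 2) * s := by
          rw [show (-3 / 2 : ℝ) = -(3 / 2) by norm_num, exp_neg]
          field_simp
      _ = exp (3 / 2) * √(2 * π) * (γ * exp (3 * γ ^ 2 / 2)) := by rw [hs, mul_assoc]

lemma one_lt_log_relSecondMoment_div {γ : ℝ} (hγ : 1 ≤ γ) :
    1 < log (relSecondMoment γ) / -log (rareProb γ) := by
  have hp := rareProb_pos hγ
  have hlog : 0 < -log (rareProb γ) := neg_pos.2 (log_neg hp (rareProb_lt_one hγ))
  rw [relSecondMoment_eq (one_pos.trans_le hγ), log_div (exp_ne_zero _) hp.ne', log_exp,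
    one_lt_div hlog]
  nlinarith

/-- `Ẽ(Z²)/p² = Θ(γ e^{3γ²/2})` as `γ → ∞`, hence the relative second
moment grows exponentially in `-log p` and the estimator is not asymptotically
efficient (the ratio `log(Ẽ(Z²)/p²)/(-log p)` does not tend to 0). -/
theorem IS_missing_point_not_asymptotically_efficient :
    (∃ c₁ c₂ : ℝ, 0 < c₁ ∧ 0 < c₂ ∧ ∀ᶠ γ in atTop,
        c₁ * (γ * Real.exp (3 * γ ^ 2 / 2)) ≤ relSecondMoment γ ∧
        relSecondMoment γ ≤ c₂ * (γ * Real.exp (3 * γ ^ 2 / 2))) ∧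
    ¬ Tendsto (fun γ => Real.log (relSecondMoment γ) / (-Real.log (rareProb γ)))
        atTop (nhds 0) := by
  refine ⟨⟨√(2 * π) / 2, exp (3 / 2) * √(2 * π), by positivity, by positivity,
    (eventually_ge_atTop 1).mono fun γ hγ => relSecondMoment_mem_Icc hγ⟩, fun h => ?_⟩
  obtain ⟨γ, hsmall, hγ⟩ :=
    ((h.eventually (gt_mem_nhds one_pos)).and (eventually_ge_atTop 1)).exists
  exact (one_lt_log_relSecondMoment_div hγ).not_gt hsmall
end

section
/- If an unbiased IS estimator $Z$ for $p = P(\mathcal A_\gamma)$ is asymptotically efficient (i.e., $\widetilde{Var}(Z)/p^2$ grows subexponentially in $-\log p$ as $\gamma\to\infty$), then $Z$ is strongly probabilistically efficient: there exists a sample size $n = n(\gamma)$ subexponential in $-\log p$ such that for every $\varepsilon > 0$, the minimal relative discrepancy $\delta_\varepsilon(\hat p, p) \to 0$ as $\gamma \to \infty$, where $\hat p$ is the sample mean of $n$ i.i.d. copies of $Z$. Moreover $\delta_\varepsilon(\hat p, p) \leq \sqrt{\widetilde{Var}(Z)/(\varepsilon n p^2)}$. -/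
/-!
With `R = Var(Z)/p²` and `L = -log p → ∞`, take `n = ⌈R L⌉ + 1`. Chebyshev's inequality for the
sample mean gives `P̃(|p̂ - p| ≥ δ p) ≤ R / (n δ²)`, so `δ_ε ≤ √(R / (ε n)) ≤ √(1 / (ε L)) → 0`,
while `log n ≤ log 3 + |log R| + log L` is `o(L)` by asymptotic efficiency.
-/

open MeasureTheory ProbabilityTheory Filter Set

section RelativeDiscrepancy

variable {Ω : Type*} [MeasurableSpace Ω]

noncomputable def minRelDiscrepancy (μ : Measure Ω) (pHat : Ω → ℝ) (p ε : ℝ) : ℝ :=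
  sInf {δ : ℝ | 0 < δ ∧ μ {ω | |pHat ω - p| > δ * p} ≤ ENNReal.ofReal ε}

lemma minRelDiscrepancy_nonneg (μ : Measure Ω) (pHat : Ω → ℝ) (p ε : ℝ) :
    0 ≤ minRelDiscrepancy μ pHat p ε :=
  Real.sInf_nonneg fun _ hδ => hδ.1.le

lemma minRelDiscrepancy_le_sqrt {μ : Measure Ω} {pHat : Ω → ℝ} {p ε v : ℝ}
    (hp : 0 < p) (hε : 0 < ε)
    (hcheb : ∀ c, 0 < c → μ {ω | c ≤ |pHat ω - p|} ≤ ENNReal.ofReal (v / c ^ 2)) :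
    minRelDiscrepancy μ pHat p ε ≤ √(v / (ε * p ^ 2)) := by
  have hsub : Ioi √(v / (ε * p ^ 2)) ⊆
      {δ : ℝ | 0 < δ ∧ μ {ω | |pHat ω - p| > δ * p} ≤ ENNReal.ofReal ε} := by
    intro δ hδ
    have hδ0 : 0 < δ := (Real.sqrt_nonneg _).trans_lt hδ
    have hv : v < ε * (δ * p) ^ 2 := by
      have := (Real.sqrt_lt' hδ0).1 hδ
      rw [div_lt_iff₀ (by positivity)] at this
      linarith
    have hmono : {ω | |pHat ω - p| > δ * p} ⊆ {ω | δ * p ≤ |pHat ω - p|} :=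
      fun _ hω => le_of_lt (a := δ * p) hω
    refine ⟨hδ0, (measure_mono hmono).trans <|
      (hcheb _ (by positivity)).trans (ENNReal.ofReal_le_ofReal ?_)⟩
    exact (div_le_iff₀ (by positivity)).2 hv.le
  calc minRelDiscrepancy μ pHat p ε ≤ sInf (Ioi √(v / (ε * p ^ 2))) :=
        csInf_le_csInf ⟨0, fun _ hδ => hδ.1.le⟩ nonempty_Ioi hsub
    _ = √(v / (ε * p ^ 2)) := csInf_Ioi

end RelativeDiscrepancy

section SampleMean

variable {Ω : Type*} [MeasurableSpace Ω] {μ : Measure Ω} {X : ℕ → Ω → ℝ}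

lemma integral_sum_range_of_identDistrib (hident : ∀ i, IdentDistrib (X i) (X 0) μ μ)
    (hint : Integrable (X 0) μ) (n : ℕ) :
    μ[∑ i ∈ Finset.range n, X i] = (n : ℝ) * μ[X 0] := by
  simp only [Finset.sum_apply]
  rw [integral_finsetSum _ fun i _ => (hident i).integrable_iff.2 hint,
    Finset.sum_congr rfl fun i _ => (hident i).integral_eq]
  simp

lemma variance_sum_range_of_identDistrib (hindep : Pairwise fun i j => X i ⟂ᵢ[μ] X j)
    (hident : ∀ i, IdentDistrib (X i) (X 0) μ μ) (hL2 : MemLp (X 0) 2 μ) (n : ℕ) :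
    Var[∑ i ∈ Finset.range n, X i; μ] = n * Var[X 0; μ] := by
  rw [IndepFun.variance_sum (fun i _ => (hident i).memLp_iff.2 hL2)
      fun i _ j _ hij => hindep hij,
    Finset.sum_congr rfl fun i _ => (hident i).variance_eq]
  simp

lemma meas_le_abs_sampleMean_sub_le [IsFiniteMeasure μ]
    (hindep : Pairwise fun i j => X i ⟂ᵢ[μ] X j)
    (hident : ∀ i, IdentDistrib (X i) (X 0) μ μ) (hL2 : MemLp (X 0) 2 μ)
    {n : ℕ} (hn : 0 < n) {c : ℝ} (hc : 0 < c) :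
    μ {ω | c ≤ |(∑ i ∈ Finset.range n, X i ω) / n - μ[X 0]|}
      ≤ ENNReal.ofReal (Var[X 0; μ] / (n * c ^ 2)) := by
  have hsum : MemLp (∑ i ∈ Finset.range n, X i) 2 μ :=
    memLp_finsetSum' _ fun i _ => (hident i).memLp_iff.2 hL2
  have hn0 : (n : ℝ) ≠ 0 := Nat.cast_ne_zero.2 hn.ne'
  have hcheb := meas_ge_le_variance_div_sq (hsum.const_mul (n : ℝ)⁻¹) hc
  rw [integral_const_mul, variance_const_mul,
    integral_sum_range_of_identDistrib hident (hL2.integrable one_le_two),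
    variance_sum_range_of_identDistrib hindep hident hL2, inv_mul_cancel_left₀ hn0] at hcheb
  refine (le_of_eq ?_).trans (hcheb.trans_eq ?_)
  · simp only [Finset.sum_apply, div_eq_inv_mul]
  · congr 1
    field_simp

lemma minRelDiscrepancy_sampleMean_le [IsFiniteMeasure μ]
    (hindep : Pairwise fun i j => X i ⟂ᵢ[μ] X j)
    (hident : ∀ i, IdentDistrib (X i) (X 0) μ μ) (hL2 : MemLp (X 0) 2 μ)
    {n : ℕ} (hn : 0 < n) {ε : ℝ} (hε : 0 < ε) (hmean : 0 < μ[X 0]) :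
    minRelDiscrepancy μ (fun ω => (∑ i ∈ Finset.range n, X i ω) / n) μ[X 0] ε
      ≤ √(Var[X 0; μ] / (ε * n * μ[X 0] ^ 2)) := by
  have h := minRelDiscrepancy_le_sqrt (v := Var[X 0; μ] / n) hmean hε fun c hc => by
    rw [div_div]
    exact meas_le_abs_sampleMean_sub_le hindep hident hL2 hn hc
  rwa [div_div, mul_left_comm, ← mul_assoc] at h

end SampleMean

section SampleSize

open Real

lemma log_natCeil_mul_add_one_le {R L : ℝ} (hR : 0 ≤ R) (hL : 1 ≤ L) :
    log ((⌈R * L⌉₊ + 1 : ℕ) : ℝ) ≤ log 3 + |log R| + log L := by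
  have hE : R ≤ exp |log R| := (le_exp_log R).trans (exp_le_exp.2 (le_abs_self _))
  have hE1 : 1 ≤ exp |log R| := one_le_exp (abs_nonneg _)
  have hceil : (⌈R * L⌉₊ : ℝ) < R * L + 1 := Nat.ceil_lt_add_one (by positivity)
  calc log ((⌈R * L⌉₊ + 1 : ℕ) : ℝ) ≤ log (3 * exp |log R| * L) := by
        gcongr
        push_cast
        nlinarith [mul_le_mul_of_nonneg_right hE (by linarith : (0 : ℝ) ≤ L)]
    _ = log 3 + |log R| + log L := by
        rw [log_mul (by positivity) (by positivity), log_mul (by norm_num) (by positivity),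
          log_exp]

lemma tendsto_log_natCeil_mul_add_one_div {α : Type*} {l : Filter α} {R L : α → ℝ}
    (hR : ∀ a, 0 ≤ R a) (hL : Tendsto L l atTop)
    (hRL : Tendsto (fun a => log (R a) / L a) l (nhds 0)) :
    Tendsto (fun a => log ((⌈R a * L a⌉₊ + 1 : ℕ) : ℝ) / L a) l (nhds 0) := by
  have hupper : Tendsto (fun a => log 3 / L a + |log (R a) / L a| + log (L a) / L a) l
      (nhds 0) := by
    simpa using ((tendsto_const_nhds.div_atTop hL).add hRL.abs).add
      (isLittleO_log_id_atTop.tendsto_div_nhds_zero.comp hL)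
  refine tendsto_of_tendsto_of_tendsto_of_le_of_le' tendsto_const_nhds hupper ?_ ?_
  all_goals filter_upwards [hL.eventually_ge_atTop 1] with a ha
  · exact div_nonneg (log_natCast_nonneg _) (by linarith)
  · rw [abs_div, abs_of_pos (by linarith : 0 < L a), ← add_div, ← add_div]
    exact div_le_div_of_nonneg_right (log_natCeil_mul_add_one_le (hR a) ha) (by linarith)

lemma div_mul_natCeil_mul_add_one_mul_le_inv {v q ε L : ℝ} (hq : 0 < q) (hε : 0 < ε)
    (hL : 0 < L) : v / (ε * ((⌈v / q * L⌉₊ + 1 : ℕ) : ℝ) * q) ≤ (ε * L)⁻¹ := by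
  set n : ℕ := ⌈v / q * L⌉₊ + 1
  have hn : v / q * L ≤ n := (Nat.le_ceil _).trans (by simp [n])
  have hvL : v * L ≤ n * q := by
    rwa [div_mul_eq_mul_div, div_le_iff₀ hq] at hn
  rw [div_le_iff₀ (by positivity), inv_mul_eq_div, le_div_iff₀ (by positivity)]
  nlinarith

end SampleSize

/-- an asymptotically efficient unbiased IS estimator is strongly
probabilistically efficient: one can choose a sample size `n(γ)` subexponential in
`-log p` such that for every `ε > 0` the minimal relative discrepancy
`δ_ε(p̂,p) = inf{δ > 0 : P̃(|p̂-p| > δp) ≤ ε}` tends to 0 as `γ → ∞`; moreover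
`δ_ε(p̂,p) ≤ √(Var(Z)/(ε n p²))`. -/
theorem asymptotic_efficiency_implies_strong_probabilistic_efficiency
    {Ω : Type*} [MeasurableSpace Ω] (tP : ℝ → Measure Ω)
    [∀ γ, IsProbabilityMeasure (tP γ)]
    (Z : ℝ → ℕ → Ω → ℝ) (hmeas : ∀ γ i, Measurable (Z γ i))
    (hindep : ∀ γ, iIndepFun (Z γ) (tP γ))
    (hident : ∀ γ i, (tP γ).map (Z γ i) = (tP γ).map (Z γ 0))
    (hL2 : ∀ γ, MemLp (Z γ 0) 2 (tP γ))
    (p : ℝ → ℝ) (hp : ∀ γ, 0 < p γ) (hp0 : Tendsto p atTop (nhds 0))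
    (hmean : ∀ γ, (tP γ)[Z γ 0] = p γ)
    (hAE : Tendsto
      (fun γ => Real.log (variance (Z γ 0) (tP γ) / (p γ) ^ 2) / (-Real.log (p γ)))
      atTop (nhds 0)) :
    ∃ n : ℝ → ℕ, (∀ γ, 0 < n γ) ∧
      Tendsto (fun γ => Real.log (n γ) / (-Real.log (p γ))) atTop (nhds 0) ∧
      ∀ ε : ℝ, 0 < ε →
        (∀ γ,
          sInf {δ : ℝ | 0 < δ ∧
              tP γ {ω | |(∑ i ∈ Finset.range (n γ), Z γ i ω) / (n γ : ℝ) - p γ| >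
                  δ * p γ} ≤ ENNReal.ofReal ε}
            ≤ Real.sqrt (variance (Z γ 0) (tP γ) / (ε * n γ * (p γ) ^ 2))) ∧
        Tendsto (fun γ =>
          sInf {δ : ℝ | 0 < δ ∧
              tP γ {ω | |(∑ i ∈ Finset.range (n γ), Z γ i ω) / (n γ : ℝ) - p γ| >
                  δ * p γ} ≤ ENNReal.ofReal ε})
          atTop (nhds 0) := by
  set R : ℝ → ℝ := fun γ => variance (Z γ 0) (tP γ) / p γ ^ 2
  set L : ℝ → ℝ := fun γ => -Real.log (p γ)
  have hL : Tendsto L atTop atTop := tendsto_neg_atBot_atTop.comp <|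
    Real.tendsto_log_nhdsGT_zero.comp <|
      tendsto_nhdsWithin_of_tendsto_nhds_of_eventually_within _ hp0 (.of_forall hp)
  set n : ℝ → ℕ := fun γ => ⌈R γ * L γ⌉₊ + 1
  have hn : ∀ γ, 0 < n γ := fun γ => Nat.succ_pos _
  refine ⟨n, hn, tendsto_log_natCeil_mul_add_one_div
    (fun γ => div_nonneg (variance_nonneg _ _) (sq_nonneg _)) hL hAE, fun ε hε => ?_⟩
  have hbound : ∀ γ, minRelDiscrepancy (tP γ) (fun ω => (∑ i ∈ Finset.range (n γ), Z γ i ω) / n γ)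
      (p γ) ε ≤ √(variance (Z γ 0) (tP γ) / (ε * n γ * p γ ^ 2)) := fun γ => by
    rw [← hmean γ]
    exact minRelDiscrepancy_sampleMean_le (fun i j hij => (hindep γ).indepFun hij)
      (fun i => ⟨(hmeas γ i).aemeasurable, (hmeas γ 0).aemeasurable, hident γ i⟩)
      (hL2 γ) (hn γ) hε (hmean γ ▸ hp γ)
  refine ⟨hbound, ?_⟩
  have hlim : Tendsto (fun γ => √((ε * L γ)⁻¹)) atTop (nhds 0) := by
    simpa using (tendsto_inv_atTop_zero.comp (hL.const_mul_atTop hε)).sqrt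
  refine tendsto_of_tendsto_of_tendsto_of_le_of_le' tendsto_const_nhds hlim
    (.of_forall fun γ => minRelDiscrepancy_nonneg _ _ _ _) ?_
  filter_upwards [hL.eventually_gt_atTop 0] with γ hLγ
  exact (hbound γ).trans <| Real.sqrt_le_sqrt <|
    div_mul_natCeil_mul_add_one_mul_le_inv (pow_pos (hp γ) 2) hε hLγ
end

section
/- Suppose $p = p_1 + p_2$ with $p_1, p_2 \geq 0$ corresponding to disjoint events $\mathcal A^1, \mathcal A^2$, and let $\hat p = \hat p_1 + \hat p_2$ where $\hat p_j$ is the sample mean of $n$ i.i.d. copies of $Z_j = I_{\mathcal A^j} \frac{dP}{d\tilde P}$ under $\tilde P$. For any $\varepsilon > n\tilde p_2$ where $\tilde p_2 = \tilde P(\mathcal A^2)$, setting $\delta = \sqrt{\frac{\widetilde{Var}(Z_1)}{n p_1^2 (\varepsilon - n\tilde p_2)}} + \frac{p_2}{p}$, one has $\tilde P(|\hat p - p| > \delta p) \leq \varepsilon$. -/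
/-!
Off the event that some sample hits `𝒜²`, which has probability at most `n p̃₂` by the union
bound, the estimator `p̂` coincides with the sample mean `p̂₁` of the `Z₁`-samples, and
`|p̂ - p| > δ p` forces `|p̂₁ - p₁| > √(Var Z₁ / (n (ε - n p̃₂)))`. By Chebyshev's inequality
for `p̂₁`, whose variance is `Var Z₁ / n`, this has probability at most `ε - n p̃₂`.
-/

open MeasureTheory ProbabilityTheory Set

noncomputable def sampleMean {Ω : Type*} (Y : ℕ → Ω → ℝ) (n : ℕ) (ω : Ω) : ℝ :=
  (∑ i ∈ Finset.range n, Y i ω) / n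

theorem sampleMean_eq_mul_inv {Ω : Type*} (Y : ℕ → Ω → ℝ) (n : ℕ) :
    sampleMean Y n = fun ω => (∑ i ∈ Finset.range n, Y i) ω * (n : ℝ)⁻¹ := by
  ext ω
  simp [sampleMean, div_eq_mul_inv]

-- The strict inequality is what makes this hold when the variance vanishes.
theorem measure_sqrt_variance_div_lt_abs_sub_le {Ω : Type*} [MeasurableSpace Ω]
    {μ : Measure Ω} [IsFiniteMeasure μ] {Z : Ω → ℝ} (hZ : MemLp Z 2 μ) {η : ℝ} (hη : 0 < η) :
    μ {ω | √(variance Z μ / η) < |Z ω - μ[Z]|} ≤ ENNReal.ofReal η := by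
  rcases (variance_nonneg Z μ).eq_or_lt with hV | hV
  · have hnull : μ {ω | √(variance Z μ / η) < |Z ω - μ[Z]|} = 0 := by
      refine measure_mono_null (fun ω hω => ?_)
        (ae_iff.mp (ae_eq_integral_of_variance_eq_zero hZ hV.symm))
      simp only [← hV, zero_div, Real.sqrt_zero, mem_ofPred_eq, abs_pos, sub_ne_zero] at hω ⊢
      exact hω
    rw [hnull]
    exact zero_le
  · have hquot : 0 < variance Z μ / η := div_pos hV hη
    calc μ {ω | √(variance Z μ / η) < |Z ω - μ[Z]|}
        ≤ μ {ω | √(variance Z μ / η) ≤ |Z ω - μ[Z]|} :=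
          measure_mono (ofPred_subset_ofPred.2 fun _ => le_of_lt)
      _ ≤ ENNReal.ofReal (variance Z μ / √(variance Z μ / η) ^ 2) :=
          meas_ge_le_variance_div_sq hZ (Real.sqrt_pos.2 hquot)
      _ = ENNReal.ofReal η := by rw [Real.sq_sqrt hquot.le, div_div_cancel₀ hV.ne']

section SampleMean

variable {Ω Ω' : Type*} [MeasurableSpace Ω] [MeasurableSpace Ω'] {μ : Measure Ω}
  {Q : Measure Ω'} {f : Ω → ℝ} {Y : ℕ → Ω' → ℝ}

theorem memLp_sampleMean (hY : ∀ i, IdentDistrib (Y i) f Q μ) (hf : MemLp f 2 μ) (n : ℕ) :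
    MemLp (sampleMean Y n) 2 Q := by
  have hsum : MemLp (∑ i ∈ Finset.range n, Y i) 2 Q :=
    memLp_finsetSum' _ fun i _ => (hY i).symm.memLp_snd hf
  rw [sampleMean_eq_mul_inv]
  exact hsum.mul_const _

theorem integral_sampleMean (hY : ∀ i, IdentDistrib (Y i) f Q μ) (hf : Integrable f μ)
    {n : ℕ} (hn : n ≠ 0) : Q[sampleMean Y n] = μ[f] := by
  have hint : ∀ i ∈ Finset.range n, ∫ ω, Y i ω ∂Q = μ[f] := fun i _ => (hY i).integral_eq
  simp only [sampleMean]
  rw [integral_div, integral_finsetSum _ fun i _ => (hY i).symm.integrable_snd hf,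
    Finset.sum_congr rfl hint, Finset.sum_const, Finset.card_range, nsmul_eq_mul,
    mul_div_cancel_left₀ _ (Nat.cast_ne_zero.2 hn)]

theorem variance_sampleMean [IsFiniteMeasure Q] (hY : ∀ i, IdentDistrib (Y i) f Q μ)
    (hf : MemLp f 2 μ) (hindep : Pairwise fun i j => IndepFun (Y i) (Y j) Q) (n : ℕ) :
    variance (sampleMean Y n) Q = variance f μ / n := by
  have hsum : variance (∑ i ∈ Finset.range n, Y i) Q = n * variance f μ := by
    rw [IndepFun.variance_sum (fun i _ => (hY i).symm.memLp_snd hf)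
      fun i _ j _ hij => hindep hij, Finset.sum_congr rfl fun i _ => (hY i).variance_eq,
      Finset.sum_const, Finset.card_range, nsmul_eq_mul]
  rw [sampleMean_eq_mul_inv, variance_mul_const, hsum]
  rcases eq_or_ne (n : ℝ) 0 with hn | hn
  · simp [hn]
  · field_simp

theorem measure_sqrt_variance_div_lt_abs_sampleMean_sub_le [IsFiniteMeasure μ]
    [IsFiniteMeasure Q] (hY : ∀ i, IdentDistrib (Y i) f Q μ) (hf : MemLp f 2 μ)
    (hindep : Pairwise fun i j => IndepFun (Y i) (Y j) Q) {n : ℕ} (hn : n ≠ 0)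
    {η : ℝ} (hη : 0 < η) :
    Q {ω | √(variance f μ / (n * η)) < |sampleMean Y n ω - μ[f]|} ≤ ENNReal.ofReal η := by
  have h := measure_sqrt_variance_div_lt_abs_sub_le (memLp_sampleMean hY hf n) hη
  rwa [variance_sampleMean hY hf hindep, integral_sampleMean hY (hf.integrable one_le_two) hn,
    div_div] at h

end SampleMean

theorem measure_exists_mem_le_mul {Ω Ω' : Type*} [MeasurableSpace Ω] [MeasurableSpace Ω']
    {μ : Measure Ω} {Q : Measure Ω'} {X : ℕ → Ω' → Ω} (hX : ∀ i, Measurable (X i))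
    (hlaw : ∀ i, Q.map (X i) = μ) {A : Set Ω} (hA : MeasurableSet A) (n : ℕ) :
    Q {ω | ∃ i ∈ Finset.range n, X i ω ∈ A} ≤ n * μ A := by
  have hunion : {ω | ∃ i ∈ Finset.range n, X i ω ∈ A} = ⋃ i ∈ Finset.range n, X i ⁻¹' A := by
    ext ω
    simp
  calc Q {ω | ∃ i ∈ Finset.range n, X i ω ∈ A}
      ≤ ∑ i ∈ Finset.range n, Q (X i ⁻¹' A) := hunion ▸ measure_biUnion_finset_le _ _
    _ = n * μ A := by
        simp_rw [← Measure.map_apply (hX _) hA, hlaw, Finset.sum_const, Finset.card_range,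
          nsmul_eq_mul]

theorem sum_indicator_union_eq_of_forall_notMem {Ω : Type*} {A1 A2 : Set Ω}
    (hdisj : Disjoint A1 A2) (L : Ω → ℝ) {s : Finset ℕ} {x : ℕ → Ω} (hx : ∀ i ∈ s, x i ∉ A2) :
    ∑ i ∈ s, (A1 ∪ A2).indicator L (x i) = ∑ i ∈ s, A1.indicator L (x i) := by
  refine Finset.sum_congr rfl fun i hi => ?_
  simp only [indicator_union_of_disjoint hdisj, indicator_of_notMem (hx i hi), add_zero]

theorem lt_abs_sub_of_mul_add_lt_abs_sub {x δ p1 p2 : ℝ} (hδ : 0 ≤ δ) (hp1 : 0 < p1)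
    (hp2 : 0 ≤ p2) (h : (δ + p2 / (p1 + p2)) * (p1 + p2) < |x - (p1 + p2)|) :
    δ * p1 < |x - p1| := by
  rw [add_mul, div_mul_cancel₀ _ (by positivity)] at h
  have htri : |x - (p1 + p2)| ≤ |x - p1| + p2 := by
    simpa [abs_of_nonneg hp2, sub_add_eq_sub_sub] using abs_sub (x - p1) p2
  nlinarith

theorem partial_dominating_points_finite_sample_bound_general
    {Ω Ω' : Type*} [MeasurableSpace Ω] [MeasurableSpace Ω']
    (tP : Measure Ω) [IsProbabilityMeasure tP]
    (Q : Measure Ω') [IsProbabilityMeasure Q]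
    (X : ℕ → Ω' → Ω) (hXmeas : ∀ i, Measurable (X i))
    (hindep : iIndepFun X Q)
    (hXlaw : ∀ i, Q.map (X i) = tP)
    (L : Ω → ℝ) (hL : Measurable L)
    (A1 A2 : Set Ω) (hA1 : MeasurableSet A1) (hA2 : MeasurableSet A2)
    (hdisj : Disjoint A1 A2)
    (p1 p2 : ℝ) (hp1 : 0 < p1) (hp2 : 0 ≤ p2)
    (hmean1 : ∫ ω, Set.indicator A1 L ω ∂tP = p1)
    (hL2 : MemLp (Set.indicator A1 L) 2 tP)
    (n : ℕ) (hn : 0 < n) (ε : ℝ)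
    (hε : (n : ℝ) * (tP A2).toReal < ε) :
    Q {ω' | |(∑ i ∈ Finset.range n, Set.indicator (A1 ∪ A2) L (X i ω')) / (n : ℝ)
          - (p1 + p2)| >
        (Real.sqrt (variance (Set.indicator A1 L) tP /
            (n * p1 ^ 2 * (ε - n * (tP A2).toReal))) + p2 / (p1 + p2)) * (p1 + p2)}
      ≤ ENNReal.ofReal ε := by
  set η := ε - n * (tP A2).toReal
  set V := variance (A1.indicator L) tP
  have hf : Measurable (A1.indicator L) := hL.indicator hA1
  set Y : ℕ → Ω' → ℝ := fun i ω' => A1.indicator L (X i ω')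
  have hYlaw : ∀ i, IdentDistrib (Y i) (A1.indicator L) Q tP := fun i =>
    IdentDistrib.comp ⟨(hXmeas i).aemeasurable, aemeasurable_id, by rw [hXlaw i, Measure.map_id]⟩ hf
  have hYindep : Pairwise fun i j => IndepFun (Y i) (Y j) Q := fun i j hij =>
    (hindep.comp _ fun _ => hf).indepFun hij
  have hdev : √(V / (n * p1 ^ 2 * η)) * p1 = √(V / (n * η)) := by
    have hsplit : V / (n * p1 ^ 2 * η) = V / (n * η) / p1 ^ 2 := by rw [div_div, mul_right_comm]
    rw [hsplit, Real.sqrt_div' _ (sq_nonneg p1), Real.sqrt_sq hp1.le, div_mul_cancel₀ _ hp1.ne']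
  calc Q {ω' | |(∑ i ∈ Finset.range n, (A1 ∪ A2).indicator L (X i ω')) / n - (p1 + p2)| >
          (√(V / (n * p1 ^ 2 * η)) + p2 / (p1 + p2)) * (p1 + p2)}
      ≤ Q ({ω' | ∃ i ∈ Finset.range n, X i ω' ∈ A2} ∪
          {ω' | √(V / (n * η)) < |sampleMean Y n ω' - tP[A1.indicator L]|}) := by
        refine measure_mono fun ω' hω' => ?_
        by_cases hhit : ∃ i ∈ Finset.range n, X i ω' ∈ A2
        · exact Or.inl hhit
        · push Not at hhit
          rw [mem_ofPred_eq, sum_indicator_union_eq_of_forall_notMem hdisj L hhit] at hω'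
          refine Or.inr ?_
          rw [mem_ofPred_eq, ← hdev, hmean1]
          exact lt_abs_sub_of_mul_add_lt_abs_sub (Real.sqrt_nonneg _) hp1 hp2 hω'
    _ ≤ n * tP A2 + ENNReal.ofReal η :=
        (measure_union_le _ _).trans <| add_le_add (measure_exists_mem_le_mul hXmeas hXlaw hA2 n)
          (measure_sqrt_variance_div_lt_abs_sampleMean_sub_le hYlaw hL2 hYindep hn.ne'
            (sub_pos.2 hε))
    _ = ENNReal.ofReal ε := by
        rw [← ENNReal.ofReal_toReal (measure_ne_top tP A2), ← ENNReal.ofReal_natCast,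
          ← ENNReal.ofReal_mul (Nat.cast_nonneg _), ← ENNReal.ofReal_add (by positivity)
          (sub_pos.2 hε).le, add_sub_cancel]

/-- finite-sample bound for an IS estimator of `p = p₁ + p₂` based on a
partial rare-event decomposition `𝒜 = 𝒜¹ ∪ 𝒜²` (disjoint). The samples `X i` are
i.i.d. from the IS measure `P̃`, `L = dP/dP̃` is the likelihood ratio, and with
`δ = √(Var(Z₁)/(n p₁² (ε - n p̃₂))) + p₂/p` we have `P̃(|p̂ - p| > δ p) ≤ ε`. -/
theorem partial_dominating_points_finite_sample_bound
    {Ω Ω' : Type*} [MeasurableSpace Ω] [MeasurableSpace Ω']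
    (tP : Measure Ω) [IsProbabilityMeasure tP]
    (Q : Measure Ω') [IsProbabilityMeasure Q]
    (X : ℕ → Ω' → Ω) (hXmeas : ∀ i, Measurable (X i))
    (hindep : iIndepFun X Q)
    (hXlaw : ∀ i, Q.map (X i) = tP)
    (L : Ω → ℝ) (hL : Measurable L) (hLnn : ∀ ω, 0 ≤ L ω)
    (A1 A2 : Set Ω) (hA1 : MeasurableSet A1) (hA2 : MeasurableSet A2)
    (hdisj : Disjoint A1 A2)
    (p1 p2 : ℝ) (hp1 : 0 < p1) (hp2 : 0 ≤ p2)
    (hmean1 : ∫ ω, Set.indicator A1 L ω ∂tP = p1)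
    (hmean2 : ∫ ω, Set.indicator A2 L ω ∂tP = p2)
    (hL2 : MemLp (Set.indicator A1 L) 2 tP)
    (n : ℕ) (hn : 0 < n) (ε : ℝ)
    (hε : (n : ℝ) * (tP A2).toReal < ε) :
    Q {ω' | |(∑ i ∈ Finset.range n, Set.indicator (A1 ∪ A2) L (X i ω')) / (n : ℝ)
          - (p1 + p2)| >
        (Real.sqrt (variance (Set.indicator A1 L) tP /
            (n * p1 ^ 2 * (ε - n * (tP A2).toReal))) + p2 / (p1 + p2)) * (p1 + p2)}
      ≤ ENNReal.ofReal ε :=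
  partial_dominating_points_finite_sample_bound_general tP Q X hXmeas hindep hXlaw L hL A1 A2 hA1
    hA2 hdisj p1 p2 hp1 hp2 hmean1 hL2 n hn ε hε
end

section
/- Under the assumptions (i) $p_1/p \to 1$, (ii) $\widetilde{Var}(Z_1)/(n p_1^2) \to 0$ for some $n = n(\gamma)$ subexponential in $-\log p$, and (iii) $n \tilde p_2 \to 0$, the IS estimator $Z = I_{\mathcal A_\gamma} \frac{dP}{d\tilde P}$ is strongly probabilistically efficient: for every $\varepsilon > 0$, $\delta_\varepsilon(\hat p, p) \leq \sqrt{\frac{\widetilde{Var}(Z_1)}{n p_1^2 (\varepsilon - n\tilde p_2)}} + \frac{p_2}{p} \to 0$ as $\gamma \to \infty$. -/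
open MeasureTheory ProbabilityTheory Filter Set Topology

open scoped ENNReal

/-!
Split the sample mean according to `𝒜_γ = 𝒜¹_γ ∪ 𝒜²_γ`. On the event that no sample falls in
`𝒜²_γ` (whose complement has probability at most `n p̃₂` by the union bound), the sample mean
only sees `Z₁`, so a relative deviation `δ p` of `p̂` forces a deviation of at least
`δ p - p₂` of the sample mean of `Z₁` from `p₁`; Chebyshev bounds the probability of the latter
by `Var(Z₁) / (n (δ p - p₂)²)`. For every `δ` above the stated bound the two error terms add up
to at most `ε`, hence the bound on `δ_ε`, and the bound tends to `0` by (i)–(iii).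
-/

lemma sInf_pos_le_of_forall_lt {P : ℝ → Prop} {b : ℝ} (hb : 0 ≤ b) (h : ∀ δ, b < δ → P δ) :
    sInf {δ | 0 < δ ∧ P δ} ≤ b :=
  le_of_forall_gt_imp_ge_of_dense fun δ hδ =>
    csInf_le ⟨0, fun _ hx => hx.1.le⟩ ⟨hb.trans_lt hδ, h δ hδ⟩

lemma mul_le_abs_sub_of_lt_abs_div_sub {a N p₁ p₂ δ : ℝ} (hN : 0 < N) (hp₂ : 0 ≤ p₂)
    (h : δ * (p₁ + p₂) < |a / N - (p₁ + p₂)|) :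
    N * (δ * (p₁ + p₂) - p₂) ≤ |a - N * p₁| := by
  have htri : |a / N - (p₁ + p₂)| ≤ |a / N - p₁| + p₂ := by
    calc |a / N - (p₁ + p₂)| ≤ |a / N - p₁| + |p₁ - (p₁ + p₂)| := abs_sub_le _ _ _
      _ = |a / N - p₁| + p₂ := by rw [sub_add_cancel_left, abs_neg, abs_of_nonneg hp₂]
  rw [show a - N * p₁ = N * (a / N - p₁) by field_simp, abs_mul, abs_of_pos hN]
  exact mul_le_mul_of_nonneg_left (by linarith) hN.le

lemma mul_lt_sub_of_add_div_lt {s p₁ p₂ δ : ℝ} (hs : 0 ≤ s) (hp₁ : 0 < p₁) (hp₂ : 0 ≤ p₂)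
    (h : s + p₂ / (p₁ + p₂) < δ) : s * p₁ < δ * (p₁ + p₂) - p₂ := by
  have hp : 0 < p₁ + p₂ := by positivity
  have h' : s * (p₁ + p₂) + p₂ < δ * (p₁ + p₂) := by
    have := mul_lt_mul_of_pos_right h hp
    rwa [add_mul, div_mul_cancel₀ _ hp.ne'] at this
  nlinarith

lemma add_div_mul_sq_le_of_sqrt_mul_lt {N p₁ q V ε t : ℝ} (hN : 0 < N) (hp₁ : 0 < p₁)
    (hV : 0 ≤ V) (hq : N * q < ε) (ht : √(V / (N * p₁ ^ 2 * (ε - N * q))) * p₁ < t) :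
    N * q + V / (N * t ^ 2) ≤ ε := by
  set s := √(V / (N * p₁ ^ 2 * (ε - N * q)))
  have hεq : 0 < ε - N * q := by linarith
  have hst : (s * p₁) ^ 2 ≤ t ^ 2 := pow_le_pow_left₀ (by positivity) ht.le 2
  have hV_eq : V = (s * p₁) ^ 2 * (N * (ε - N * q)) := by
    rw [mul_pow, Real.sq_sqrt (by positivity)]
    field_simp
  have ht₀ : 0 < t := lt_of_le_of_lt (by positivity) ht
  have : V / (N * t ^ 2) ≤ ε - N * q := by
    rw [div_le_iff₀ (by positivity), hV_eq]
    nlinarith [mul_le_mul_of_nonneg_right hst (by positivity : 0 ≤ N * (ε - N * q))]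
  linarith

section IidSample

variable {Ω Ω' : Type*} [MeasurableSpace Ω] [MeasurableSpace Ω'] {μ : Measure Ω}
  {ν : Measure Ω'} {X : ℕ → Ω' → Ω}

lemma measure_biUnion_preimage_le_card_mul (hX : ∀ i, MeasurePreserving (X i) ν μ)
    {A : Set Ω} (hA : MeasurableSet A) (s : Finset ℕ) :
    ν (⋃ i ∈ s, X i ⁻¹' A) ≤ s.card * μ A :=
  calc ν (⋃ i ∈ s, X i ⁻¹' A) ≤ ∑ i ∈ s, ν (X i ⁻¹' A) := measure_biUnion_finset_le _ _
    _ = s.card * μ A := by simp [(hX _).measure_preimage hA.nullMeasurableSet]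

lemma meas_ge_abs_sum_comp_sub_le [IsFiniteMeasure ν] (hX : ∀ i, MeasurePreserving (X i) ν μ)
    (hindep : iIndepFun X ν) {f : Ω → ℝ} (hf : Measurable f) (hf₂ : MemLp f 2 μ) {n : ℕ}
    (hn : 0 < n) {t : ℝ} (ht : 0 < t) :
    ν {ω | n * t ≤ |∑ i ∈ Finset.range n, f (X i ω) - n * ∫ x, f x ∂μ|}
      ≤ ENNReal.ofReal (variance f μ / (n * t ^ 2)) := by
  set Y : ℕ → Ω' → ℝ := fun i ω => f (X i ω)
  have hY₂ : ∀ i, MemLp (Y i) 2 ν := fun i => hf₂.comp_measurePreserving (hX i)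
  have hY_mean : ∀ i, ∫ ω, Y i ω ∂ν = ∫ x, f x ∂μ := fun i => by
    rw [← (hX i).map_eq, integral_map (hX i).aemeasurable hf.aestronglyMeasurable]
  have hsum_eq : (fun ω => ∑ i ∈ Finset.range n, Y i ω) = ∑ i ∈ Finset.range n, Y i := by
    ext ω; simp
  have hsum_mean : ν[∑ i ∈ Finset.range n, Y i] = n * ∫ x, f x ∂μ := by
    rw [← hsum_eq, integral_finsetSum _ fun i _ => (hY₂ i).integrable one_le_two]
    simp [hY_mean]
  have hsum_var : variance (∑ i ∈ Finset.range n, Y i) ν = n * variance f μ := by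
    rw [IndepFun.variance_sum (fun i _ => hY₂ i)
      fun i _ j _ hij => (hindep.comp (fun _ => f) fun _ => hf).indepFun hij]
    simp [Y, (hX _).variance_fun_comp hf.aemeasurable]
  have hcheb := meas_ge_le_variance_div_sq (memLp_finsetSum' (Finset.range n) fun i _ => hY₂ i)
    (mul_pos (Nat.cast_pos.2 hn) ht)
  rw [hsum_var, hsum_mean] at hcheb
  have hn' : (n : ℝ) ≠ 0 := by positivity
  convert hcheb using 2
  · simp [Y]
  · field_simp

lemma measure_relative_deviation_le [IsFiniteMeasure ν]
    (hX : ∀ i, MeasurePreserving (X i) ν μ) (hindep : iIndepFun X ν)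
    {L : Ω → ℝ} (hL : Measurable L) {A₁ A₂ : Set Ω} (hA₁ : MeasurableSet A₁)
    (hA₂ : MeasurableSet A₂) (hdisj : Disjoint A₁ A₂) (hL₂ : MemLp (A₁.indicator L) 2 μ)
    {p₁ p₂ δ : ℝ} (hmean₁ : ∫ ω, A₁.indicator L ω ∂μ = p₁) (hp₂ : 0 ≤ p₂)
    (hδ : p₂ < δ * (p₁ + p₂)) {n : ℕ} (hn : 0 < n) :
    ν {ω | |(∑ i ∈ Finset.range n, (A₁ ∪ A₂).indicator L (X i ω)) / (n : ℝ) - (p₁ + p₂)|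
        > δ * (p₁ + p₂)}
      ≤ n * μ A₂ + ENNReal.ofReal
          (variance (A₁.indicator L) μ / (n * (δ * (p₁ + p₂) - p₂) ^ 2)) := by
  set t := δ * (p₁ + p₂) - p₂
  have hsub : {ω | |(∑ i ∈ Finset.range n, (A₁ ∪ A₂).indicator L (X i ω)) / (n : ℝ)
        - (p₁ + p₂)| > δ * (p₁ + p₂)}
      ⊆ (⋃ i ∈ Finset.range n, X i ⁻¹' A₂)
        ∪ {ω | n * t ≤ |∑ i ∈ Finset.range n, A₁.indicator L (X i ω) - n * p₁|} := by
    intro ω hω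
    refine or_iff_not_imp_left.2 fun hA₂ω => ?_
    have hsum : ∑ i ∈ Finset.range n, (A₁ ∪ A₂).indicator L (X i ω)
        = ∑ i ∈ Finset.range n, A₁.indicator L (X i ω) := by
      refine Finset.sum_congr rfl fun i hi => ?_
      have hi₂ : X i ω ∉ A₂ := fun h => hA₂ω (mem_biUnion hi h)
      simp only [indicator_union_of_disjoint hdisj, indicator_of_notMem hi₂, add_zero]
    rw [mem_ofPred_eq, hsum] at hω
    exact mul_le_abs_sub_of_lt_abs_div_sub (Nat.cast_pos.2 hn) hp₂ hω
  calc _ ≤ _ := measure_mono hsub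
    _ ≤ _ := measure_union_le _ _
    _ ≤ _ := by
      gcongr
      · simpa using measure_biUnion_preimage_le_card_mul hX hA₂ (Finset.range n)
      · rw [← hmean₁]
        exact meas_ge_abs_sum_comp_sub_le hX hindep (hL.indicator hA₁) hL₂ hn (by linarith)

lemma measure_relative_deviation_le_ofReal [IsFiniteMeasure μ] [IsFiniteMeasure ν]
    (hX : ∀ i, MeasurePreserving (X i) ν μ) (hindep : iIndepFun X ν)
    {L : Ω → ℝ} (hL : Measurable L) {A₁ A₂ : Set Ω} (hA₁ : MeasurableSet A₁)
    (hA₂ : MeasurableSet A₂) (hdisj : Disjoint A₁ A₂) (hL₂ : MemLp (A₁.indicator L) 2 μ)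
    {p₁ p₂ : ℝ} (hmean₁ : ∫ ω, A₁.indicator L ω ∂μ = p₁) (hp₁ : 0 < p₁) (hp₂ : 0 ≤ p₂)
    {n : ℕ} (hn : 0 < n) {ε δ : ℝ} (hq : n * (μ A₂).toReal < ε)
    (hδ : √(variance (A₁.indicator L) μ / (n * p₁ ^ 2 * (ε - n * (μ A₂).toReal)))
        + p₂ / (p₁ + p₂) < δ) :
    ν {ω | |(∑ i ∈ Finset.range n, (A₁ ∪ A₂).indicator L (X i ω)) / (n : ℝ) - (p₁ + p₂)|
        > δ * (p₁ + p₂)} ≤ ENNReal.ofReal ε := by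
  have hn' : (0 : ℝ) < n := Nat.cast_pos.2 hn
  have ht := mul_lt_sub_of_add_div_lt (Real.sqrt_nonneg _) hp₁ hp₂ hδ
  have hδ' : p₂ < δ * (p₁ + p₂) := by
    nlinarith [Real.sqrt_nonneg
      (variance (A₁.indicator L) μ / (n * p₁ ^ 2 * (ε - n * (μ A₂).toReal)))]
  refine (measure_relative_deviation_le hX hindep hL hA₁ hA₂ hdisj hL₂ hmean₁ hp₂ hδ' hn).trans ?_
  rw [← ENNReal.ofReal_toReal (measure_ne_top μ A₂), ← ENNReal.ofReal_natCast,
    ← ENNReal.ofReal_mul hn'.le, ← ENNReal.ofReal_add (by positivity)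
      (div_nonneg (variance_nonneg _ _) (by positivity))]
  exact ENNReal.ofReal_le_ofReal
    (add_div_mul_sq_le_of_sqrt_mul_lt hn' hp₁ (variance_nonneg _ _) hq ht)

end IidSample

lemma tendsto_sqrt_div_add_div_nhds_zero {α : Type*} {l : Filter α} {V N q p₁ p₂ : α → ℝ}
    {ε : ℝ} (hε : ε ≠ 0) (hp : ∀ a, p₁ a + p₂ a ≠ 0)
    (hvar : Tendsto (fun a => V a / (N a * p₁ a ^ 2)) l (𝓝 0))
    (hq : Tendsto (fun a => N a * q a) l (𝓝 0))
    (hratio : Tendsto (fun a => p₁ a / (p₁ a + p₂ a)) l (𝓝 1)) :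
    Tendsto (fun a => √(V a / (N a * p₁ a ^ 2 * (ε - N a * q a))) + p₂ a / (p₁ a + p₂ a))
      l (𝓝 0) := by
  have hsqrt : Tendsto (fun a => √(V a / (N a * p₁ a ^ 2 * (ε - N a * q a)))) l (𝓝 0) := by
    have h := hvar.div ((tendsto_const_nhds (x := ε)).sub hq) (by rwa [sub_zero])
    simpa [div_div] using h.sqrt
  have hrest : Tendsto (fun a => p₂ a / (p₁ a + p₂ a)) l (𝓝 0) := by
    have h := tendsto_const_nhds (x := (1 : ℝ)).sub hratio
    rw [sub_self] at h
    refine h.congr fun a => ?_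
    rw [sub_eq_iff_eq_add, ← add_div, add_comm (p₂ a), div_self (hp a)]
  simpa using hsqrt.add hrest

theorem strong_probabilistic_efficiency_partial_dominating_points_general
    {Ω Ω' : Type*} [MeasurableSpace Ω] [MeasurableSpace Ω']
    (tP : ℝ → Measure Ω) [∀ γ, IsProbabilityMeasure (tP γ)]
    (Q : ℝ → Measure Ω') [∀ γ, IsProbabilityMeasure (Q γ)]
    (X : ℝ → ℕ → Ω' → Ω) (hXmeas : ∀ γ i, Measurable (X γ i))
    (hindep : ∀ γ, iIndepFun (X γ) (Q γ))
    (hXlaw : ∀ γ i, (Q γ).map (X γ i) = tP γ)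
    (L : ℝ → Ω → ℝ) (hL : ∀ γ, Measurable (L γ))
    (A1 A2 : ℝ → Set Ω) (hA1 : ∀ γ, MeasurableSet (A1 γ))
    (hA2 : ∀ γ, MeasurableSet (A2 γ)) (hdisj : ∀ γ, Disjoint (A1 γ) (A2 γ))
    (p1 p2 : ℝ → ℝ) (hp1 : ∀ γ, 0 < p1 γ) (hp2 : ∀ γ, 0 ≤ p2 γ)
    (hmean1 : ∀ γ, ∫ ω, Set.indicator (A1 γ) (L γ) ω ∂(tP γ) = p1 γ)
    (hL2 : ∀ γ, MemLp (Set.indicator (A1 γ) (L γ)) 2 (tP γ))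
    (n : ℝ → ℕ) (hn : ∀ γ, 0 < n γ)
    (hratio : Tendsto (fun γ => p1 γ / (p1 γ + p2 γ)) atTop (nhds 1))
    (hvar : Tendsto (fun γ =>
        variance (Set.indicator (A1 γ) (L γ)) (tP γ) / (n γ * (p1 γ) ^ 2))
      atTop (nhds 0))
    (htp2 : Tendsto (fun γ => (n γ : ℝ) * (tP γ (A2 γ)).toReal) atTop (nhds 0)) :
    ∀ ε : ℝ, 0 < ε →
      (∀ᶠ γ in atTop,
        sInf {δ : ℝ | 0 < δ ∧
            Q γ {ω' | |(∑ i ∈ Finset.range (n γ),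
                  Set.indicator (A1 γ ∪ A2 γ) (L γ) (X γ i ω')) / (n γ : ℝ)
                - (p1 γ + p2 γ)| > δ * (p1 γ + p2 γ)} ≤ ENNReal.ofReal ε}
          ≤ Real.sqrt (variance (Set.indicator (A1 γ) (L γ)) (tP γ) /
              (n γ * (p1 γ) ^ 2 * (ε - n γ * (tP γ (A2 γ)).toReal)))
            + p2 γ / (p1 γ + p2 γ)) ∧
      Tendsto (fun γ =>
          Real.sqrt (variance (Set.indicator (A1 γ) (L γ)) (tP γ) /
              (n γ * (p1 γ) ^ 2 * (ε - n γ * (tP γ (A2 γ)).toReal)))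
            + p2 γ / (p1 γ + p2 γ)) atTop (nhds 0) ∧
      Tendsto (fun γ =>
          sInf {δ : ℝ | 0 < δ ∧
              Q γ {ω' | |(∑ i ∈ Finset.range (n γ),
                    Set.indicator (A1 γ ∪ A2 γ) (L γ) (X γ i ω')) / (n γ : ℝ)
                  - (p1 γ + p2 γ)| > δ * (p1 γ + p2 γ)} ≤ ENNReal.ofReal ε})
        atTop (nhds 0) := by
  intro ε hε
  have hp : ∀ γ, 0 < p1 γ + p2 γ := fun γ => add_pos_of_pos_of_nonneg (hp1 γ) (hp2 γ)
  have hbound := (htp2.eventually_lt_const hε).mono fun γ hq =>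
    sInf_pos_le_of_forall_lt
      (add_nonneg (Real.sqrt_nonneg _) (div_nonneg (hp2 γ) (hp γ).le))
      fun δ hδ => measure_relative_deviation_le_ofReal
        (fun i => ⟨hXmeas γ i, hXlaw γ i⟩) (hindep γ) (hL γ) (hA1 γ) (hA2 γ) (hdisj γ)
        (hL2 γ) (hmean1 γ) (hp1 γ) (hp2 γ) (hn γ) hq hδ
  have hlim := tendsto_sqrt_div_add_div_nhds_zero hε.ne' (fun γ => (hp γ).ne') hvar htp2 hratio
  exact ⟨hbound, hlim, tendsto_of_tendsto_of_tendsto_of_le_of_le' tendsto_const_nhds hlim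
    (Eventually.of_forall fun γ => Real.sInf_nonneg fun _ hx => hx.1.le) hbound⟩

/-- achieving strong probabilistic efficiency with a partial
decomposition `𝒜_γ = 𝒜¹_γ ∪ 𝒜²_γ` (disjoint). Under (i) `p₁/p → 1`,
(ii) `Var(Z₁)/(n p₁²) → 0` for an `n(γ)` subexponential in `-log p`, and
(iii) `n p̃₂ → 0`, for every `ε > 0` the minimal relative discrepancy satisfies
`δ_ε(p̂,p) ≤ √(Var(Z₁)/(n p₁² (ε - n p̃₂))) + p₂/p → 0`, so the IS estimator is
strongly probabilistically efficient. -/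
theorem strong_probabilistic_efficiency_partial_dominating_points
    {Ω Ω' : Type*} [MeasurableSpace Ω] [MeasurableSpace Ω']
    (tP : ℝ → Measure Ω) [∀ γ, IsProbabilityMeasure (tP γ)]
    (Q : ℝ → Measure Ω') [∀ γ, IsProbabilityMeasure (Q γ)]
    (X : ℝ → ℕ → Ω' → Ω) (hXmeas : ∀ γ i, Measurable (X γ i))
    (hindep : ∀ γ, iIndepFun (X γ) (Q γ))
    (hXlaw : ∀ γ i, (Q γ).map (X γ i) = tP γ)
    (L : ℝ → Ω → ℝ) (hL : ∀ γ, Measurable (L γ)) (hLnn : ∀ γ ω, 0 ≤ L γ ω)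
    (A1 A2 : ℝ → Set Ω) (hA1 : ∀ γ, MeasurableSet (A1 γ))
    (hA2 : ∀ γ, MeasurableSet (A2 γ)) (hdisj : ∀ γ, Disjoint (A1 γ) (A2 γ))
    (p1 p2 : ℝ → ℝ) (hp1 : ∀ γ, 0 < p1 γ) (hp2 : ∀ γ, 0 ≤ p2 γ)
    (hmean1 : ∀ γ, ∫ ω, Set.indicator (A1 γ) (L γ) ω ∂(tP γ) = p1 γ)
    (hmean2 : ∀ γ, ∫ ω, Set.indicator (A2 γ) (L γ) ω ∂(tP γ) = p2 γ)
    (hL2 : ∀ γ, MemLp (Set.indicator (A1 γ) (L γ)) 2 (tP γ))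
    (n : ℝ → ℕ) (hn : ∀ γ, 0 < n γ)
    (hp0 : Tendsto (fun γ => p1 γ + p2 γ) atTop (nhds 0))
    (hratio : Tendsto (fun γ => p1 γ / (p1 γ + p2 γ)) atTop (nhds 1))
    (hsubexp : Tendsto (fun γ => Real.log (n γ) /
        (-Real.log (p1 γ + p2 γ))) atTop (nhds 0))
    (hvar : Tendsto (fun γ =>
        variance (Set.indicator (A1 γ) (L γ)) (tP γ) / (n γ * (p1 γ) ^ 2))
      atTop (nhds 0))
    (htp2 : Tendsto (fun γ => (n γ : ℝ) * (tP γ (A2 γ)).toReal) atTop (nhds 0)) :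
    ∀ ε : ℝ, 0 < ε →
      (∀ᶠ γ in atTop,
        sInf {δ : ℝ | 0 < δ ∧
            Q γ {ω' | |(∑ i ∈ Finset.range (n γ),
                  Set.indicator (A1 γ ∪ A2 γ) (L γ) (X γ i ω')) / (n γ : ℝ)
                - (p1 γ + p2 γ)| > δ * (p1 γ + p2 γ)} ≤ ENNReal.ofReal ε}
          ≤ Real.sqrt (variance (Set.indicator (A1 γ) (L γ)) (tP γ) /
              (n γ * (p1 γ) ^ 2 * (ε - n γ * (tP γ (A2 γ)).toReal)))
            + p2 γ / (p1 γ + p2 γ)) ∧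
      Tendsto (fun γ =>
          Real.sqrt (variance (Set.indicator (A1 γ) (L γ)) (tP γ) /
              (n γ * (p1 γ) ^ 2 * (ε - n γ * (tP γ (A2 γ)).toReal)))
            + p2 γ / (p1 γ + p2 γ)) atTop (nhds 0) ∧
      Tendsto (fun γ =>
          sInf {δ : ℝ | 0 < δ ∧
              Q γ {ω' | |(∑ i ∈ Finset.range (n γ),
                    Set.indicator (A1 γ ∪ A2 γ) (L γ) (X γ i ω')) / (n γ : ℝ)
                  - (p1 γ + p2 γ)| > δ * (p1 γ + p2 γ)} ≤ ENNReal.ofReal ε})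
        atTop (nhds 0) :=
  strong_probabilistic_efficiency_partial_dominating_points_general tP Q X hXmeas hindep hXlaw L hL
    A1 A2 hA1 hA2 hdisj p1 p2 hp1 hp2 hmean1 hL2 n hn hratio hvar htp2
end

section
/- Under the assumptions (i) $\liminf_{\gamma\to\infty} p_1/p = c$ for some $0 < c \leq 1$, (ii) $\widetilde{Var}(Z_1)/(n p_1^2) \to 0$ for some $n = n(\gamma)$ subexponential in $-\log p$, and (iii) $n \tilde p_2 \to 0$, one has $\limsup_{\gamma\to\infty} \delta_\varepsilon(\hat p, p) \leq 1 - c < 1$ for every $\varepsilon > 0$, so the IS estimator is weakly probabilistically efficient. -/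
open MeasureTheory ProbabilityTheory Filter Set

/-!
Fix `b > 1 - c` and `θ = (b - (1 - c)) / 2`. If no sample falls into `A₂`, the estimator is the
sample mean of `n` copies of `Z₁`, and then `|p̂ - p| > b p` forces `|p̂ - p₁| ≥ θ p₁` as soon as
`p₁ / p > c - θ`, which holds eventually by (i). Chebyshev bounds the probability of the latter
by `Var(Z₁) / (n p₁² θ²)`, and a union bound bounds the probability that some sample falls into
`A₂` by `n p̃₂`. By (ii) and (iii) both terms eventually sum to less than `ε`, so eventually
`δ_ε ≤ b`.
-/

lemma le_abs_sub_mul_of_lt_abs_div_sub {S n p₁ p₂ θ b : ℝ} (hn : 0 < n) (hp₂ : 0 ≤ p₂)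
    (hb : θ * p₁ + p₂ ≤ b * (p₁ + p₂)) (h : b * (p₁ + p₂) < |S / n - (p₁ + p₂)|) :
    θ * (n * p₁) ≤ |S - n * p₁| := by
  have htri : |S / n - (p₁ + p₂)| ≤ |S / n - p₁| + p₂ := by
    simpa [abs_of_nonneg hp₂] using abs_sub_le (S / n) p₁ (p₁ + p₂)
  have hscale : |S - n * p₁| = n * |S / n - p₁| := by
    rw [← abs_of_pos hn, ← abs_mul, abs_of_pos hn, mul_sub, mul_div_cancel₀ S hn.ne']
  rw [hscale, mul_left_comm]
  exact mul_le_mul_of_nonneg_left (by linarith) hn.le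

lemma mul_add_le_of_sub_lt_div {p₁ p₂ c θ b : ℝ} (hp₁ : 0 < p₁) (hp₂ : 0 ≤ p₂) (hθ : 0 ≤ θ)
    (hθb : 1 - c + 2 * θ ≤ b) (h : c - θ < p₁ / (p₁ + p₂)) :
    θ * p₁ + p₂ ≤ b * (p₁ + p₂) := by
  have hp : 0 < p₁ + p₂ := by positivity
  have hratio : (c - θ) * (p₁ + p₂) < p₁ := (lt_div_iff₀ hp).mp h
  nlinarith

lemma limsup_le_of_forall_gt_eventually_le {α : Type*} {f : Filter α} {u : α → ℝ} {a : ℝ}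
    (hu : f.IsCoboundedUnder (· ≤ ·) u) (h : ∀ b > a, ∀ᶠ x in f, u x ≤ b) :
    limsup u f ≤ a :=
  (limsup_le_iff' hu ⟨a + 1, h (a + 1) (lt_add_one a)⟩).mpr h

lemma sum_indicator_union_of_forall_notMem {ι Ω : Type*} {s : Finset ι} {x : ι → Ω}
    {A₁ A₂ : Set Ω} {L : Ω → ℝ} (h : ∀ i ∈ s, x i ∉ A₂) :
    ∑ i ∈ s, (A₁ ∪ A₂).indicator L (x i) = ∑ i ∈ s, A₁.indicator L (x i) := by
  refine Finset.sum_congr rfl fun i hi => ?_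
  by_cases h₁ : x i ∈ A₁ <;> simp [indicator, h₁, h i hi]

section SampleMean

variable {Ω Ω' : Type*} [MeasurableSpace Ω] [MeasurableSpace Ω']
  {μ : Measure Ω} {Q : Measure Ω'} {X : ℕ → Ω' → Ω}

lemma meas_abs_sum_comp_sub_ge_le [IsProbabilityMeasure Q] (hX : ∀ i, AEMeasurable (X i) Q)
    (hindep : iIndepFun X Q) (hlaw : ∀ i, Q.map (X i) = μ) {Z : Ω → ℝ} (hZ : MemLp Z 2 μ)
    (n : ℕ) {t : ℝ} (ht : 0 < t) :
    Q {ω | t ≤ |∑ i ∈ Finset.range n, Z (X i ω) - n * ∫ x, Z x ∂μ|}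
      ≤ ENNReal.ofReal (n * variance Z μ / t ^ 2) := by
  have hZX : ∀ i, AEMeasurable Z (Q.map (X i)) := fun i => hlaw i ▸ hZ.aemeasurable
  have hident : ∀ i, IdentDistrib (Z ∘ X i) Z Q μ := fun i =>
    (IdentDistrib.comp_of_aemeasurable (g := id)
      ⟨hX i, aemeasurable_id, by rw [hlaw i, Measure.map_id]⟩ (hZX i))
  have hmem : ∀ i, MemLp (Z ∘ X i) 2 Q := fun i => (hident i).memLp_iff.mpr hZ
  have hsum_mem : MemLp (∑ i ∈ Finset.range n, Z ∘ X i) 2 Q :=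
    memLp_finsetSum' _ fun i _ => hmem i
  have hmean : ∫ ω, (∑ i ∈ Finset.range n, Z ∘ X i) ω ∂Q = n * ∫ x, Z x ∂μ := by
    simp only [Finset.sum_apply]
    rw [integral_finsetSum _ fun i _ => (hmem i).integrable one_le_two,
      Finset.sum_congr rfl fun i _ => (hident i).integral_eq]
    simp
  have hvar : variance (∑ i ∈ Finset.range n, Z ∘ X i) Q = n * variance Z μ := by
    rw [IndepFun.variance_sum (fun i _ => hmem i) fun i _ j _ hij =>
      (hindep.comp₀ (fun _ => Z) hX hZX).indepFun hij]
    simp [fun i => (hident i).variance_eq]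
  have := meas_ge_le_variance_div_sq hsum_mem ht
  rw [hmean, hvar] at this
  simpa using this

lemma measure_biUnion_preimage_le (hX : ∀ i, AEMeasurable (X i) Q) (hlaw : ∀ i, Q.map (X i) = μ)
    {A : Set Ω} (hA : MeasurableSet A) (n : ℕ) :
    Q (⋃ i ∈ Finset.range n, X i ⁻¹' A) ≤ n * μ A :=
  calc Q (⋃ i ∈ Finset.range n, X i ⁻¹' A) ≤ ∑ i ∈ Finset.range n, Q (X i ⁻¹' A) :=
        measure_biUnion_finset_le _ _
    _ = n * μ A := by
        simp [← fun i => Measure.map_apply₀ (hX i) hA.nullMeasurableSet, hlaw]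

lemma measure_abs_sampleMean_sub_gt_le [IsProbabilityMeasure Q] [IsFiniteMeasure μ]
    (hX : ∀ i, AEMeasurable (X i) Q) (hindep : iIndepFun X Q) (hlaw : ∀ i, Q.map (X i) = μ)
    {L : Ω → ℝ} {A₁ A₂ : Set Ω} (hA₂ : MeasurableSet A₂) (hZ : MemLp (A₁.indicator L) 2 μ)
    {p₁ p₂ : ℝ} (hp₁ : 0 < p₁) (hp₂ : 0 ≤ p₂) (hmean : ∫ x, A₁.indicator L x ∂μ = p₁)
    {n : ℕ} (hn : 0 < n) {θ b : ℝ} (hθ : 0 < θ) (hb : θ * p₁ + p₂ ≤ b * (p₁ + p₂)) :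
    Q {ω | |(∑ i ∈ Finset.range n, (A₁ ∪ A₂).indicator L (X i ω)) / n - (p₁ + p₂)|
        > b * (p₁ + p₂)}
      ≤ ENNReal.ofReal (variance (A₁.indicator L) μ / (n * p₁ ^ 2) / θ ^ 2
        + n * (μ A₂).toReal) := by
  have hnR : (0 : ℝ) < n := Nat.cast_pos.mpr hn
  have ht : 0 < θ * (n * p₁) := by positivity
  have hsub : {ω | |(∑ i ∈ Finset.range n, (A₁ ∪ A₂).indicator L (X i ω)) / n - (p₁ + p₂)|
        > b * (p₁ + p₂)}
      ⊆ {ω | θ * (n * p₁) ≤ |∑ i ∈ Finset.range n, A₁.indicator L (X i ω) - n * p₁|}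
        ∪ ⋃ i ∈ Finset.range n, X i ⁻¹' A₂ := by
    intro ω hω
    by_cases hA₂ω : ω ∈ ⋃ i ∈ Finset.range n, X i ⁻¹' A₂
    · exact Or.inr hA₂ω
    have hsum := sum_indicator_union_of_forall_notMem (A₁ := A₁) (L := L)
      fun i hi (h : X i ω ∈ A₂) => hA₂ω (mem_biUnion hi h)
    simp only [mem_ofPred_eq, hsum] at hω
    exact Or.inl (le_abs_sub_mul_of_lt_abs_div_sub hnR hp₂ hb hω)
  have hcheb := meas_abs_sum_comp_sub_ge_le hX hindep hlaw hZ n ht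
  rw [hmean] at hcheb
  calc _ ≤ _ := measure_mono hsub
    _ ≤ _ := measure_union_le _ _
    _ ≤ ENNReal.ofReal (n * variance (A₁.indicator L) μ / (θ * (n * p₁)) ^ 2) + n * μ A₂ :=
        add_le_add hcheb (measure_biUnion_preimage_le hX hlaw hA₂ n)
    _ = _ := by
        rw [ENNReal.ofReal_add (by have := variance_nonneg (A₁.indicator L) μ; positivity)
          (by positivity), ENNReal.ofReal_mul (by positivity),
          ENNReal.ofReal_natCast, ENNReal.ofReal_toReal (measure_ne_top μ A₂)]
        congr 2
        field_simp

end SampleMean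

theorem weak_probabilistic_efficiency_partial_dominating_points_general
    {Ω Ω' : Type*} [MeasurableSpace Ω] [MeasurableSpace Ω']
    (tP : ℝ → Measure Ω) [∀ γ, IsProbabilityMeasure (tP γ)]
    (Q : ℝ → Measure Ω') [∀ γ, IsProbabilityMeasure (Q γ)]
    (X : ℝ → ℕ → Ω' → Ω) (hXmeas : ∀ γ i, Measurable (X γ i))
    (hindep : ∀ γ, iIndepFun (X γ) (Q γ))
    (hXlaw : ∀ γ i, (Q γ).map (X γ i) = tP γ)
    (L : ℝ → Ω → ℝ)
    (A1 A2 : ℝ → Set Ω)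
    (hA2 : ∀ γ, MeasurableSet (A2 γ))
    (p1 p2 : ℝ → ℝ) (hp1 : ∀ γ, 0 < p1 γ) (hp2 : ∀ γ, 0 ≤ p2 γ)
    (hmean1 : ∀ γ, ∫ ω, Set.indicator (A1 γ) (L γ) ω ∂(tP γ) = p1 γ)
    (hL2 : ∀ γ, MemLp (Set.indicator (A1 γ) (L γ)) 2 (tP γ))
    (n : ℝ → ℕ) (hn : ∀ γ, 0 < n γ)
    (c : ℝ) (hc0 : 0 < c)
    (hliminf : Filter.liminf (fun γ => p1 γ / (p1 γ + p2 γ)) atTop = c)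
    (hvar : Tendsto (fun γ =>
        variance (Set.indicator (A1 γ) (L γ)) (tP γ) / (n γ * (p1 γ) ^ 2))
      atTop (nhds 0))
    (htp2 : Tendsto (fun γ => (n γ : ℝ) * (tP γ (A2 γ)).toReal) atTop (nhds 0)) :
    ∀ ε : ℝ, 0 < ε →
      Filter.limsup (fun γ =>
          sInf {δ : ℝ | 0 < δ ∧
              Q γ {ω' | |(∑ i ∈ Finset.range (n γ),
                    Set.indicator (A1 γ ∪ A2 γ) (L γ) (X γ i ω')) / (n γ : ℝ)
                  - (p1 γ + p2 γ)| > δ * (p1 γ + p2 γ)} ≤ ENNReal.ofReal ε})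
        atTop ≤ 1 - c ∧ (1 - c : ℝ) < 1 := by
  intro ε hε
  refine ⟨limsup_le_of_forall_gt_eventually_le (isCoboundedUnder_le_of_le atTop fun γ =>
    Real.sInf_nonneg fun δ hδ => hδ.1.le) fun b hb => ?_, by linarith⟩
  obtain ⟨θ, hθ, hθb⟩ : ∃ θ, 0 < θ ∧ 1 - c + 2 * θ ≤ b :=
    ⟨(b - (1 - c)) / 2, by linarith, by linarith⟩
  have hp : ∀ γ, 0 < p1 γ + p2 γ := fun γ => add_pos_of_pos_of_nonneg (hp1 γ) (hp2 γ)
  have hratio : ∀ᶠ γ in atTop, c - θ < p1 γ / (p1 γ + p2 γ) :=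
    eventually_lt_of_lt_liminf (hliminf ▸ sub_lt_self c hθ)
      ⟨0, eventually_map.mpr (.of_forall fun γ => div_nonneg (hp1 γ).le (hp γ).le)⟩
  have herror : Tendsto (fun γ => variance ((A1 γ).indicator (L γ)) (tP γ) / (n γ * p1 γ ^ 2)
      / θ ^ 2 + n γ * (tP γ (A2 γ)).toReal) atTop (nhds 0) := by
    simpa using (hvar.div_const (θ ^ 2)).add htp2
  filter_upwards [hratio, herror.eventually (gt_mem_nhds hε)] with γ hratioγ herrorγ
  have hb : θ * p1 γ + p2 γ ≤ b * (p1 γ + p2 γ) :=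
    mul_add_le_of_sub_lt_div (hp1 γ) (hp2 γ) hθ.le hθb hratioγ
  refine csInf_le ⟨0, fun δ hδ => hδ.1.le⟩ ⟨?_, ?_⟩
  · exact pos_of_mul_pos_left
      ((add_pos_of_pos_of_nonneg (mul_pos hθ (hp1 γ)) (hp2 γ)).trans_le hb) (hp γ).le
  · exact (measure_abs_sampleMean_sub_gt_le (fun i => (hXmeas γ i).aemeasurable) (hindep γ)
      (hXlaw γ) (hA2 γ) (hL2 γ) (hp1 γ) (hp2 γ) (hmean1 γ) (hn γ) hθ hb).trans
      (ENNReal.ofReal_le_ofReal herrorγ.le)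

/-- achieving weak probabilistic efficiency with a partial
decomposition `𝒜_γ = 𝒜¹_γ ∪ 𝒜²_γ` (disjoint). Under (i) `liminf p₁/p = c` with
`0 < c ≤ 1`, (ii) `Var(Z₁)/(n p₁²) → 0` for an `n(γ)` subexponential in `-log p`,
and (iii) `n p̃₂ → 0`, for every `ε > 0` we have `limsup δ_ε(p̂,p) ≤ 1 - c < 1`,
so the IS estimator is weakly probabilistically efficient. -/
theorem weak_probabilistic_efficiency_partial_dominating_points
    {Ω Ω' : Type*} [MeasurableSpace Ω] [MeasurableSpace Ω']
    (tP : ℝ → Measure Ω) [∀ γ, IsProbabilityMeasure (tP γ)]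
    (Q : ℝ → Measure Ω') [∀ γ, IsProbabilityMeasure (Q γ)]
    (X : ℝ → ℕ → Ω' → Ω) (hXmeas : ∀ γ i, Measurable (X γ i))
    (hindep : ∀ γ, iIndepFun (X γ) (Q γ))
    (hXlaw : ∀ γ i, (Q γ).map (X γ i) = tP γ)
    (L : ℝ → Ω → ℝ) (hL : ∀ γ, Measurable (L γ)) (hLnn : ∀ γ ω, 0 ≤ L γ ω)
    (A1 A2 : ℝ → Set Ω) (hA1 : ∀ γ, MeasurableSet (A1 γ))
    (hA2 : ∀ γ, MeasurableSet (A2 γ)) (hdisj : ∀ γ, Disjoint (A1 γ) (A2 γ))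
    (p1 p2 : ℝ → ℝ) (hp1 : ∀ γ, 0 < p1 γ) (hp2 : ∀ γ, 0 ≤ p2 γ)
    (hmean1 : ∀ γ, ∫ ω, Set.indicator (A1 γ) (L γ) ω ∂(tP γ) = p1 γ)
    (hmean2 : ∀ γ, ∫ ω, Set.indicator (A2 γ) (L γ) ω ∂(tP γ) = p2 γ)
    (hL2 : ∀ γ, MemLp (Set.indicator (A1 γ) (L γ)) 2 (tP γ))
    (n : ℝ → ℕ) (hn : ∀ γ, 0 < n γ)
    (hp0 : Tendsto (fun γ => p1 γ + p2 γ) atTop (nhds 0))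
    (c : ℝ) (hc0 : 0 < c) (hc1 : c ≤ 1)
    (hliminf : Filter.liminf (fun γ => p1 γ / (p1 γ + p2 γ)) atTop = c)
    (hsubexp : Tendsto (fun γ => Real.log (n γ) /
        (-Real.log (p1 γ + p2 γ))) atTop (nhds 0))
    (hvar : Tendsto (fun γ =>
        variance (Set.indicator (A1 γ) (L γ)) (tP γ) / (n γ * (p1 γ) ^ 2))
      atTop (nhds 0))
    (htp2 : Tendsto (fun γ => (n γ : ℝ) * (tP γ (A2 γ)).toReal) atTop (nhds 0)) :
    ∀ ε : ℝ, 0 < ε →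
      Filter.limsup (fun γ =>
          sInf {δ : ℝ | 0 < δ ∧
              Q γ {ω' | |(∑ i ∈ Finset.range (n γ),
                    Set.indicator (A1 γ ∪ A2 γ) (L γ) (X γ i ω')) / (n γ : ℝ)
                  - (p1 γ + p2 γ)| > δ * (p1 γ + p2 γ)} ≤ ENNReal.ofReal ε})
        atTop ≤ 1 - c ∧ (1 - c : ℝ) < 1 :=
  weak_probabilistic_efficiency_partial_dominating_points_general tP Q X hXmeas hindep hXlaw L A1 A2
    hA2 p1 p2 hp1 hp2 hmean1 hL2 n hn c hc0 hliminf hvar htp2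
end
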